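/- arXiv:2002.08212 — 2 statements merged into one kernel-verified Lean document; each statement's English description precedes it below -/
import Mathlib

section
/- Chaining bound: Let R₁ = [0,a] × [0,b] with a,b ∈ [0,1], let 𝒢ₙ = {(k·2^{-4n}, ℓ·2^{-2n}) : k, ℓ ∈ ℕ}, 𝒢 = ∪ₙ 𝒢ₙ, and let (δₙ)_{n≥0} be a sequence of nonnegative reals. Suppose g : R₁ → ℝ^d satisfies |g(p¹) - g(p²)| ≤ δₙ for every n ≥ 0 and every nearest-neighbor pair p¹, p² ∈ 𝒢ₙ ∩ R₁. Then for all p¹, p² ∈ 𝒢 ∩ R₁, |g(p¹) - g(p²)| ≤ 40 · Σ_{n=n₀}^∞ δₙ, where n₀ is the integer part of log₂(1/Δ(p¹ - p²)) and Δ(t,x) = max(|t|^{1/4}, |x|^{1/2}). -/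
open scoped ENNReal

/-- The parabolic gauge `Δ(t,x) = max(|t|^{1/4}, |x|^{1/2})`. -/
noncomputable def Delta (p : ℝ × ℝ) : ℝ :=
  max (|p.1| ^ ((1 : ℝ) / 4)) (|p.2| ^ ((1 : ℝ) / 2))

/-- The anisotropic grid `𝒢ₙ = {(k 2^{-4n}, ℓ 2^{-2n}) : k, ℓ ∈ ℕ}`. -/
def grid (n : ℕ) : Set (ℝ × ℝ) :=
  {p | ∃ k l : ℕ, p = ((k : ℝ) * 2 ^ (-(4 * n : ℤ)), (l : ℝ) * 2 ^ (-(2 * n : ℤ)))}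

/-- `p` and `q` are nearest neighbors in `𝒢ₙ`: they differ by `2^{-4n}` in the first
coordinate or by `2^{-2n}` in the second coordinate. -/
def IsNN (n : ℕ) (p q : ℝ × ℝ) : Prop :=
  (|p.1 - q.1| = 2 ^ (-(4 * n : ℤ)) ∧ p.2 = q.2) ∨
  (p.1 = q.1 ∧ |p.2 - q.2| = 2 ^ (-(2 * n : ℤ)))

/-!
Round p and q down to the level-n grid for every n ≥ n₀. Since Δ(p - q) ≤ 2^{-n₀}, the two
level-n₀ roundings are at most one lattice step apart in each coordinate; passing from level n
to n + 1 moves a rounding by at most 15 time steps and 3 space steps of the finer grid; and at a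
level where p and q both lie on the grid they are their own roundings. Joining these points by
lattice paths, which stay in R₁ because R₁ ∩ 𝒢ₙ is a product of two initial segments, bounds
|g(p) - g(q)| by 2δ_{n₀} + 2 · 18 ∑_{n > n₀} δₙ ≤ 40 ∑_{n ≥ n₀} δₙ.
-/

open Set

section Floor

variable {x y h : ℝ}

theorem Nat.floor_div_mul_le (hx : 0 ≤ x) (hh : 0 < h) : (⌊x / h⌋₊ : ℝ) * h ≤ x :=
  (le_div_iff₀ hh).1 (Nat.floor_le (div_nonneg hx hh.le))

theorem Nat.floor_div_div_natCast_div (x h : ℝ) {m : ℕ} (hm : m ≠ 0) :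
    ⌊x / (h / m)⌋₊ / m = ⌊x / h⌋₊ := by
  rw [← Nat.floor_div_natCast, div_div_eq_mul_div, mul_div_right_comm,
    mul_div_cancel_right₀ _ (Nat.cast_ne_zero.2 hm)]

theorem Nat.floor_div_le_floor_div_add_one (hy : 0 ≤ y) (hh : 0 < h) (hxy : x ≤ y + h) :
    ⌊x / h⌋₊ ≤ ⌊y / h⌋₊ + 1 := by
  rw [← Nat.floor_add_one (div_nonneg hy hh.le)]
  exact Nat.floor_le_floor (by rwa [div_add_one hh.ne', div_le_div_iff_of_pos_right hh])

theorem Nat.dist_floor_div_le_one (hx : 0 ≤ x) (hy : 0 ≤ y) (hh : 0 < h) (hxy : |x - y| ≤ h) :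
    Nat.dist ⌊x / h⌋₊ ⌊y / h⌋₊ ≤ 1 := by
  have h₁ := Nat.floor_div_le_floor_div_add_one (x := x) hy hh (by linarith [(abs_le.1 hxy).2])
  have h₂ := Nat.floor_div_le_floor_div_add_one (x := y) hx hh (by linarith [(abs_le.1 hxy).1])
  unfold Nat.dist
  omega

end Floor

section Chains

variable {E : Type*} [PseudoMetricSpace E]

theorem dist_le_natDist_mul {F : ℕ → E} {D : ℝ} {K : ℕ}
    (hF : ∀ k < K, dist (F k) (F (k + 1)) ≤ D) {k₁ k₂ : ℕ} (h₁ : k₁ ≤ K) (h₂ : k₂ ≤ K) :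
    dist (F k₁) (F k₂) ≤ k₁.dist k₂ * D := by
  wlog hle : k₁ ≤ k₂ generalizing k₁ k₂
  · rw [dist_comm, Nat.dist_comm]
    exact this h₂ h₁ (by omega)
  calc dist (F k₁) (F k₂) ≤ ∑ _ ∈ Finset.Ico k₁ k₂, D :=
        dist_le_Ico_sum_of_dist_le hle fun _ hk => hF _ (by omega)
    _ = k₁.dist k₂ * D := by
        rw [Finset.sum_const, Nat.card_Ico, nsmul_eq_mul, Nat.dist_eq_sub_of_le hle]

theorem dist_le_natDist_add_natDist_mul {F : ℕ → ℕ → E} {D : ℝ} {K L : ℕ}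
    (hx : ∀ k < K, ∀ l ≤ L, dist (F k l) (F (k + 1) l) ≤ D)
    (hy : ∀ k ≤ K, ∀ l < L, dist (F k l) (F k (l + 1)) ≤ D)
    {k₁ k₂ l₁ l₂ : ℕ} (hk₁ : k₁ ≤ K) (hk₂ : k₂ ≤ K) (hl₁ : l₁ ≤ L) (hl₂ : l₂ ≤ L) :
    dist (F k₁ l₁) (F k₂ l₂) ≤ (k₁.dist k₂ + l₁.dist l₂ : ℕ) * D := by
  calc dist (F k₁ l₁) (F k₂ l₂) ≤ dist (F k₁ l₁) (F k₂ l₁) + dist (F k₂ l₁) (F k₂ l₂) :=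
        dist_triangle _ _ _
    _ ≤ k₁.dist k₂ * D + l₁.dist l₂ * D :=
        add_le_add (dist_le_natDist_mul (fun k hk => hx k hk l₁ hl₁) hk₁ hk₂)
          (dist_le_natDist_mul (fun l hl => hy k₂ hk₂ l hl) hl₁ hl₂)
    _ = (k₁.dist k₂ + l₁.dist l₂ : ℕ) * D := by push_cast; ring

end Chains

/-- Written with `zpow`, like `grid`, so that `gridPoint n k l ∈ grid n` holds by `rfl`. -/
noncomputable def timeMesh (n : ℕ) : ℝ := 2 ^ (-(4 * n : ℤ))

noncomputable def spaceMesh (n : ℕ) : ℝ := 2 ^ (-(2 * n : ℤ))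

theorem timeMesh_pos (n : ℕ) : 0 < timeMesh n := by unfold timeMesh; positivity

theorem spaceMesh_pos (n : ℕ) : 0 < spaceMesh n := by unfold spaceMesh; positivity

theorem timeMesh_succ (n : ℕ) : timeMesh (n + 1) = timeMesh n / 16 := by
  rw [timeMesh, timeMesh, Nat.cast_succ, mul_add, neg_add, zpow_add₀ (two_ne_zero' ℝ)]
  norm_num [div_eq_mul_inv]

theorem spaceMesh_succ (n : ℕ) : spaceMesh (n + 1) = spaceMesh n / 4 := by
  rw [spaceMesh, spaceMesh, Nat.cast_succ, mul_add, neg_add, zpow_add₀ (two_ne_zero' ℝ)]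
  norm_num [div_eq_mul_inv]

noncomputable def gridPoint (n k l : ℕ) : ℝ × ℝ := (k * timeMesh n, l * spaceMesh n)

theorem mem_grid_iff {n : ℕ} {p : ℝ × ℝ} : p ∈ grid n ↔ ∃ k l, p = gridPoint n k l := Iff.rfl

theorem gridPoint_mem_grid (n k l : ℕ) : gridPoint n k l ∈ grid n := ⟨k, l, rfl⟩

theorem gridPoint_succ (n k l : ℕ) : gridPoint n k l = gridPoint (n + 1) (16 * k) (4 * l) := by
  simp only [gridPoint, timeMesh_succ, spaceMesh_succ, Prod.mk.injEq]
  constructor <;> push_cast <;> ring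

theorem grid_mono : Monotone grid := by
  refine monotone_nat_of_le_succ fun n p hp => ?_
  obtain ⟨k, l, rfl⟩ := mem_grid_iff.1 hp
  rw [gridPoint_succ]
  exact gridPoint_mem_grid _ _ _

theorem isNN_gridPoint_succ_left (n k l : ℕ) :
    IsNN n (gridPoint n k l) (gridPoint n (k + 1) l) := by
  refine Or.inl ⟨?_, rfl⟩
  rw [gridPoint, gridPoint, ← timeMesh, Nat.cast_succ, add_mul, one_mul, sub_add_cancel_left,
    abs_neg, abs_of_pos (timeMesh_pos n)]

theorem isNN_gridPoint_succ_right (n k l : ℕ) :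
    IsNN n (gridPoint n k l) (gridPoint n k (l + 1)) := by
  refine Or.inr ⟨rfl, ?_⟩
  rw [gridPoint, gridPoint, ← spaceMesh, Nat.cast_succ, add_mul, one_mul, sub_add_cancel_left,
    abs_neg, abs_of_pos (spaceMesh_pos n)]

theorem gridPoint_mem_box_iff {a b : ℝ} {n k l : ℕ} :
    gridPoint n k l ∈ Icc 0 a ×ˢ Icc 0 b ↔ k * timeMesh n ≤ a ∧ l * spaceMesh n ≤ b := by
  have := timeMesh_pos n
  have := spaceMesh_pos n
  simp only [gridPoint, mem_prod, mem_Icc]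
  constructor
  · exact fun h => ⟨h.1.2, h.2.2⟩
  · exact fun h => ⟨⟨by positivity, h.1⟩, ⟨by positivity, h.2⟩⟩

theorem gridPoint_mem_box_of_le {a b : ℝ} {n k l k' l' : ℕ} (hk : k ≤ k') (hl : l ≤ l')
    (h : gridPoint n k' l' ∈ Icc 0 a ×ˢ Icc 0 b) : gridPoint n k l ∈ Icc 0 a ×ˢ Icc 0 b := by
  rw [gridPoint_mem_box_iff] at h ⊢
  exact ⟨le_trans (by gcongr; exact (timeMesh_pos n).le) h.1,
    le_trans (by gcongr; exact (spaceMesh_pos n).le) h.2⟩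

theorem gridPoint_max_mem_box {a b : ℝ} {n k₁ k₂ l₁ l₂ : ℕ}
    (h₁ : gridPoint n k₁ l₁ ∈ Icc 0 a ×ˢ Icc 0 b) (h₂ : gridPoint n k₂ l₂ ∈ Icc 0 a ×ˢ Icc 0 b) :
    gridPoint n (max k₁ k₂) (max l₁ l₂) ∈ Icc 0 a ×ˢ Icc 0 b := by
  rw [gridPoint_mem_box_iff] at h₁ h₂ ⊢
  simp only [Nat.cast_max, max_mul_of_nonneg _ _ (timeMesh_pos n).le,
    max_mul_of_nonneg _ _ (spaceMesh_pos n).le]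
  exact ⟨max_le h₁.1 h₂.1, max_le h₁.2 h₂.2⟩

noncomputable def gridProj (n : ℕ) (p : ℝ × ℝ) : ℝ × ℝ :=
  gridPoint n ⌊p.1 / timeMesh n⌋₊ ⌊p.2 / spaceMesh n⌋₊

theorem gridProj_mem_box {a b : ℝ} (n : ℕ) {p : ℝ × ℝ} (hp : p ∈ Icc 0 a ×ˢ Icc 0 b) :
    gridProj n p ∈ Icc 0 a ×ˢ Icc 0 b :=
  gridPoint_mem_box_iff.2
    ⟨(Nat.floor_div_mul_le hp.1.1 (timeMesh_pos n)).trans hp.1.2,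
      (Nat.floor_div_mul_le hp.2.1 (spaceMesh_pos n)).trans hp.2.2⟩

theorem gridProj_eq_self {n : ℕ} {p : ℝ × ℝ} (hp : p ∈ grid n) : gridProj n p = p := by
  obtain ⟨k, l, rfl⟩ := mem_grid_iff.1 hp
  simp only [gridProj, gridPoint,
    mul_div_cancel_right₀ _ (timeMesh_pos n).ne', mul_div_cancel_right₀ _ (spaceMesh_pos n).ne',
    Nat.floor_natCast]

theorem gridProj_eq_gridPoint_succ (n : ℕ) (p : ℝ × ℝ) :
    gridProj n p = gridPoint (n + 1) (16 * (⌊p.1 / timeMesh (n + 1)⌋₊ / 16))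
      (4 * (⌊p.2 / spaceMesh (n + 1)⌋₊ / 4)) := by
  rw [← gridPoint_succ, timeMesh_succ, spaceMesh_succ,
    ← Nat.cast_ofNat (n := 16), ← Nat.cast_ofNat (R := ℝ) (n := 4),
    Nat.floor_div_div_natCast_div _ _ (by norm_num),
    Nat.floor_div_div_natCast_div _ _ (by norm_num)]
  rfl

theorem timeMesh_eq_inv_pow (n : ℕ) : timeMesh n = ((2 : ℝ) ^ n)⁻¹ ^ 4 := by
  rw [timeMesh, zpow_neg, inv_pow, ← pow_mul, mul_comm]
  norm_cast

theorem spaceMesh_eq_inv_pow (n : ℕ) : spaceMesh n = ((2 : ℝ) ^ n)⁻¹ ^ 2 := by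
  rw [spaceMesh, zpow_neg, inv_pow, ← pow_mul, mul_comm]
  norm_cast

theorem Delta_le_one {v : ℝ × ℝ} (h₁ : |v.1| ≤ 1) (h₂ : |v.2| ≤ 1) : Delta v ≤ 1 :=
  max_le (Real.rpow_le_one (abs_nonneg _) h₁ (by norm_num))
    (Real.rpow_le_one (abs_nonneg _) h₂ (by norm_num))

theorem le_inv_two_pow_floor_logb {y : ℝ} (hy₀ : 0 ≤ y) (hy₁ : y ≤ 1) :
    y ≤ ((2 : ℝ) ^ ⌊Real.logb 2 (1 / y)⌋₊)⁻¹ := by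
  rcases hy₀.eq_or_lt with rfl | hy₀
  · positivity
  have hlog : 0 ≤ Real.logb 2 (1 / y) :=
    Real.logb_nonneg one_lt_two ((one_le_div hy₀).2 hy₁)
  have hpow : (2 : ℝ) ^ ⌊Real.logb 2 (1 / y)⌋₊ ≤ 1 / y := by
    rw [← Real.rpow_natCast, ← Real.le_logb_iff_rpow_le one_lt_two (by positivity)]
    exact Nat.floor_le hlog
  rwa [le_one_div (by positivity) hy₀, ← inv_eq_one_div] at hpow

theorem abs_fst_le_timeMesh {v : ℝ × ℝ} {n : ℕ} (h : Delta v ≤ ((2 : ℝ) ^ n)⁻¹) :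
    |v.1| ≤ timeMesh n := by
  have h₁ : |v.1| ^ (4⁻¹ : ℝ) ≤ ((2 : ℝ) ^ n)⁻¹ := by simpa using (le_max_left _ _).trans h
  rw [Real.rpow_inv_le_iff_of_pos (abs_nonneg _) (by positivity) (by norm_num)] at h₁
  rwa [Real.rpow_ofNat, ← timeMesh_eq_inv_pow] at h₁

theorem abs_snd_le_spaceMesh {v : ℝ × ℝ} {n : ℕ} (h : Delta v ≤ ((2 : ℝ) ^ n)⁻¹) :
    |v.2| ≤ spaceMesh n := by
  have h₂ : |v.2| ^ (2⁻¹ : ℝ) ≤ ((2 : ℝ) ^ n)⁻¹ := by simpa using (le_max_right _ _).trans h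
  rw [Real.rpow_inv_le_iff_of_pos (abs_nonneg _) (by positivity) (by norm_num)] at h₂
  rwa [Real.rpow_ofNat, ← spaceMesh_eq_inv_pow] at h₂

open scoped NNReal in
theorem ENNReal.ofReal_le_mul_tsum_of_le_sum {f : ℕ → ℝ} (hf : ∀ n, 0 ≤ f n) {c : ℝ≥0}
    {x : ℝ} {M : ℕ} (hx : x ≤ ∑ i ∈ Finset.range M, c * f i) :
    ENNReal.ofReal x ≤ c * ∑' i, ENNReal.ofReal (f i) :=
  calc ENNReal.ofReal x ≤ ENNReal.ofReal (∑ i ∈ Finset.range M, c * f i) :=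
        ENNReal.ofReal_le_ofReal hx
    _ = c * ∑ i ∈ Finset.range M, ENNReal.ofReal (f i) := by
        rw [ENNReal.ofReal_sum_of_nonneg (f := fun i => c * f i) fun i _ => mul_nonneg c.2 (hf i),
          Finset.mul_sum]
        simp [ENNReal.ofReal_mul]
    _ ≤ c * ∑' i, ENNReal.ofReal (f i) := by gcongr; exact ENNReal.sum_le_tsum _

section Chaining

variable {E : Type*} [PseudoMetricSpace E] {g : ℝ × ℝ → E} {δ : ℕ → ℝ} {a b : ℝ}

def NearestNeighborBound (g : ℝ × ℝ → E) (δ : ℕ → ℝ) (R : Set (ℝ × ℝ)) : Prop :=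
  ∀ n p q, p ∈ grid n ∩ R → q ∈ grid n ∩ R → IsNN n p q → dist (g p) (g q) ≤ δ n

theorem NearestNeighborBound.dist_gridPoint_le
    (hg : NearestNeighborBound g δ (Icc 0 a ×ˢ Icc 0 b)) {n k₁ k₂ l₁ l₂ : ℕ}
    (h₁ : gridPoint n k₁ l₁ ∈ Icc 0 a ×ˢ Icc 0 b) (h₂ : gridPoint n k₂ l₂ ∈ Icc 0 a ×ˢ Icc 0 b) :
    dist (g (gridPoint n k₁ l₁)) (g (gridPoint n k₂ l₂)) ≤ (k₁.dist k₂ + l₁.dist l₂ : ℕ) * δ n := by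
  have hmem : ∀ k ≤ max k₁ k₂, ∀ l ≤ max l₁ l₂, gridPoint n k l ∈ Icc 0 a ×ˢ Icc 0 b :=
    fun k hk l hl => gridPoint_mem_box_of_le hk hl (gridPoint_max_mem_box h₁ h₂)
  refine dist_le_natDist_add_natDist_mul (F := fun k l => g (gridPoint n k l))
    (K := max k₁ k₂) (L := max l₁ l₂) ?_ ?_ (le_max_left _ _) (le_max_right _ _)
    (le_max_left _ _) (le_max_right _ _)
  · exact fun k hk l hl => hg n _ _ ⟨gridPoint_mem_grid _ _ _, hmem k hk.le l hl⟩
      ⟨gridPoint_mem_grid _ _ _, hmem (k + 1) hk l hl⟩ (isNN_gridPoint_succ_left n k l)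
  · exact fun k hk l hl => hg n _ _ ⟨gridPoint_mem_grid _ _ _, hmem k hk l hl.le⟩
      ⟨gridPoint_mem_grid _ _ _, hmem k hk (l + 1) hl⟩ (isNN_gridPoint_succ_right n k l)

theorem NearestNeighborBound.dist_gridProj_le
    (hg : NearestNeighborBound g δ (Icc 0 a ×ˢ Icc 0 b)) (hδ : ∀ n, 0 ≤ δ n) {n : ℕ}
    {p q : ℝ × ℝ} (hp : p ∈ Icc 0 a ×ˢ Icc 0 b) (hq : q ∈ Icc 0 a ×ˢ Icc 0 b)
    (h₁ : |p.1 - q.1| ≤ timeMesh n) (h₂ : |p.2 - q.2| ≤ spaceMesh n) :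
    dist (g (gridProj n p)) (g (gridProj n q)) ≤ 2 * δ n := by
  have hk := Nat.dist_floor_div_le_one hp.1.1 hq.1.1 (timeMesh_pos n) h₁
  have hl := Nat.dist_floor_div_le_one hp.2.1 hq.2.1 (spaceMesh_pos n) h₂
  refine (hg.dist_gridPoint_le (gridProj_mem_box n hp) (gridProj_mem_box n hq)).trans ?_
  gcongr
  · exact hδ n
  · exact_mod_cast (show _ ≤ 2 by omega)

theorem NearestNeighborBound.dist_gridProj_succ_le
    (hg : NearestNeighborBound g δ (Icc 0 a ×ˢ Icc 0 b)) (hδ : ∀ n, 0 ≤ δ n) (n : ℕ)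
    {p : ℝ × ℝ} (hp : p ∈ Icc 0 a ×ˢ Icc 0 b) :
    dist (g (gridProj n p)) (g (gridProj (n + 1) p)) ≤ 18 * δ (n + 1) := by
  have hmem := gridProj_mem_box n hp
  rw [gridProj_eq_gridPoint_succ] at hmem ⊢
  refine (hg.dist_gridPoint_le hmem (gridProj_mem_box (n + 1) hp)).trans ?_
  gcongr
  · exact hδ _
  -- `K` and `16 * (K / 16)` differ by `K % 16 ≤ 15`, and `L`, `4 * (L / 4)` by `L % 4 ≤ 3`.
  · exact_mod_cast (show _ ≤ 18 by simp only [Nat.dist]; omega)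

theorem NearestNeighborBound.dist_gridProj_gridProj_le_sum
    (hg : NearestNeighborBound g δ (Icc 0 a ×ˢ Icc 0 b)) (hδ : ∀ n, 0 ≤ δ n) {n N : ℕ}
    (hnN : n ≤ N) {p : ℝ × ℝ} (hp : p ∈ Icc 0 a ×ˢ Icc 0 b) :
    dist (g (gridProj n p)) (g (gridProj N p)) ≤ ∑ i ∈ Finset.Ico n N, 18 * δ (i + 1) :=
  dist_le_Ico_sum_of_dist_le (f := fun n => g (gridProj n p)) hnN
    fun _ _ => hg.dist_gridProj_succ_le hδ _ hp

theorem NearestNeighborBound.dist_le_sum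
    (hg : NearestNeighborBound g δ (Icc 0 a ×ˢ Icc 0 b)) (hδ : ∀ n, 0 ≤ δ n) {n N : ℕ}
    (hnN : n ≤ N) {p q : ℝ × ℝ} (hp : p ∈ grid N ∩ Icc 0 a ×ˢ Icc 0 b)
    (hq : q ∈ grid N ∩ Icc 0 a ×ˢ Icc 0 b)
    (h₁ : |p.1 - q.1| ≤ timeMesh n) (h₂ : |p.2 - q.2| ≤ spaceMesh n) :
    dist (g p) (g q) ≤ ∑ i ∈ Finset.range (N - n + 1), 40 * δ (n + i) := by
  have hchain := fun {r} (hr : r ∈ Icc 0 a ×ˢ Icc 0 b) =>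
    hg.dist_gridProj_gridProj_le_sum hδ hnN hr
  rw [Finset.sum_Ico_eq_sum_range] at hchain
  calc dist (g p) (g q) = dist (g (gridProj N p)) (g (gridProj N q)) := by
        rw [gridProj_eq_self hp.1, gridProj_eq_self hq.1]
    _ ≤ dist (g (gridProj N p)) (g (gridProj n p)) + dist (g (gridProj n p)) (g (gridProj n q)) +
          dist (g (gridProj n q)) (g (gridProj N q)) := dist_triangle4 _ _ _ _
    _ ≤ (∑ i ∈ Finset.range (N - n), 18 * δ (n + i + 1)) + 2 * δ n +
          ∑ i ∈ Finset.range (N - n), 18 * δ (n + i + 1) := by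
        rw [dist_comm]
        gcongr
        exacts [hchain hp.2, hg.dist_gridProj_le hδ hp.2 hq.2 h₁ h₂, hchain hq.2]
    _ ≤ ∑ i ∈ Finset.range (N - n + 1), 40 * δ (n + i) := by
        rw [Finset.sum_range_succ', add_zero]
        have hsum : 2 * ∑ i ∈ Finset.range (N - n), 18 * δ (n + i + 1) ≤
            ∑ i ∈ Finset.range (N - n), 40 * δ (n + (i + 1)) := by
          rw [Finset.mul_sum]
          exact Finset.sum_le_sum fun i _ => by rw [← add_assoc]; linarith [hδ (n + i + 1)]
        linarith [hδ n]

end Chaining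

theorem exists_mem_grid_ge {p q : ℝ × ℝ} (hp : p ∈ ⋃ n, grid n) (hq : q ∈ ⋃ n, grid n) (n₀ : ℕ) :
    ∃ N, n₀ ≤ N ∧ p ∈ grid N ∧ q ∈ grid N := by
  obtain ⟨m, hm⟩ := mem_iUnion.1 hp
  obtain ⟨m', hm'⟩ := mem_iUnion.1 hq
  exact ⟨max n₀ (max m m'), le_max_left _ _, grid_mono (by omega) hm, grid_mono (by omega) hm'⟩

open scoped ENNReal in
theorem chaining_bound (d : ℕ) (a b : ℝ) (ha : a ∈ Set.Icc (0:ℝ) 1) (hb : b ∈ Set.Icc (0:ℝ) 1)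
    (δ : ℕ → ℝ) (hδ : ∀ n, 0 ≤ δ n)
    (g : ℝ × ℝ → EuclideanSpace ℝ (Fin d))
    (R₁ : Set (ℝ × ℝ)) (hR₁ : R₁ = Set.Icc 0 a ×ˢ Set.Icc 0 b)
    (hg : ∀ n : ℕ, ∀ p q : ℝ × ℝ, p ∈ grid n ∩ R₁ → q ∈ grid n ∩ R₁ → IsNN n p q →
      ‖g p - g q‖ ≤ δ n) :
    ∀ p q : ℝ × ℝ, p ∈ (⋃ n, grid n) ∩ R₁ → q ∈ (⋃ n, grid n) ∩ R₁ →
      (‖g p - g q‖₊ : ℝ≥0∞) ≤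
        40 * ∑' n : ℕ, ENNReal.ofReal (δ (⌊Real.logb 2 (1 / Delta (p - q))⌋₊ + n)) := by
  subst hR₁
  rintro p q ⟨hpG, hp⟩ ⟨hqG, hq⟩
  have hg' : NearestNeighborBound g δ (Icc 0 a ×ˢ Icc 0 b) := by
    simpa only [NearestNeighborBound, dist_eq_norm] using hg
  set n₀ := ⌊Real.logb 2 (1 / Delta (p - q))⌋₊
  have hΔ : Delta (p - q) ≤ ((2 : ℝ) ^ n₀)⁻¹ :=
    le_inv_two_pow_floor_logb (le_max_of_le_left (by positivity))
      (Delta_le_one ((Real.dist_le_of_mem_Icc hp.1 hq.1).trans (by linarith [ha.2]))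
        ((Real.dist_le_of_mem_Icc hp.2 hq.2).trans (by linarith [hb.2])))
  obtain ⟨N, hn₀N, hpN, hqN⟩ := exists_mem_grid_ge hpG hqG n₀
  rw [← ENNReal.ofReal_coe_nnreal, coe_nnnorm, ← dist_eq_norm]
  exact ENNReal.ofReal_le_mul_tsum_of_le_sum (c := 40) (fun n => hδ _) <| by
    exact_mod_cast hg'.dist_le_sum hδ hn₀N ⟨hpN, hp⟩ ⟨hqN, hq⟩ (abs_fst_le_timeMesh hΔ)
      (abs_snd_le_spaceMesh hΔ)
end

section
/- Union-bound chaining probability estimate: Let R₁ = [0,a]×[0,b] with a,b ∈ [0,1], grids 𝒢ₙ as above, and let n_{R₁} be the largest n such that 𝒢ₙ ∩ R₁ is contained in a single grid rectangle of type n. Let Y : R₁ × Ω → ℝ^d be a stochastic process, and suppose (δₙ), (εₙ) are nonnegative sequences such that for all n ≥ n_{R₁} and every nearest-neighbor pair p¹,p² ∈ 𝒢ₙ ∩ R₁, P{|Y(p¹) - Y(p²)| > δₙ} ≤ εₙ. Let A be the event that for all p¹,p² ∈ 𝒢 ∩ R₁, |Y(p¹) - Y(p²)| ≤ 40·Σ_{n=n₀(p¹,p²)}^∞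 δₙ. Then P(Aᶜ) ≤ 4·Σ_{n=n_{R₁}}^∞ 2^{6n} εₙ. -/
open MeasureTheory
open scoped ENNReal

/-- `𝒢ₙ ∩ R₁` is contained in a single grid rectangle of type `n`. -/
def InSingleRect (R₁ : Set (ℝ × ℝ)) (n : ℕ) : Prop :=
  ∃ k l : ℕ, grid n ∩ R₁ ⊆
    Set.Icc ((k : ℝ) * 2 ^ (-(4 * n : ℤ))) ((k + 1 : ℝ) * 2 ^ (-(4 * n : ℤ))) ×ˢ
    Set.Icc ((l : ℝ) * 2 ^ (-(2 * n : ℤ))) ((l + 1 : ℝ) * 2 ^ (-(2 * n : ℤ)))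


/-!
Off the union, over levels `n ≥ n_{R₁}`, of the events that some nearest-neighbour increment of
`Y` on `𝒢ₙ ∩ R₁` exceeds `δₙ`, a chaining argument gives the bound; the union has probability at
most `∑ 4·2^{6n} εₙ` since `𝒢ₙ ∩ R₁` has at most `2^{6n+2}` nearest-neighbour pairs.

For the chaining, truncate the indices of a level-`(n+1)` point dyadically to get its level-`n`
ancestor, at most `15 + 3 = 18` grid steps away. Descend from `p` and `q` to the level
`s = max(n₀, n_{R₁})`, at cost `18 ∑_{n > s} δₙ` each. There the two ancestors differ by at most one
in each index: for `s = n₀` because `p - q = (t, x)` has `|t| ≤ 2^{-4n₀}`, `|x| ≤ 2^{-2n₀}`; for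
`s = n_{R₁}` because `𝒢_s ∩ R₁` lies in a single grid rectangle. They are thus joined by at most
`4` steps, and `18 + 4 + 18 = 40`.
-/

open Finset Real

namespace ParabolicGrid

noncomputable def pt (n k l : ℕ) : ℝ × ℝ := ((k : ℝ) / 2 ^ (4 * n), (l : ℝ) / 2 ^ (2 * n))

def rect (a b : ℝ) : Set (ℝ × ℝ) := Set.Icc 0 a ×ˢ Set.Icc 0 b

lemma mem_grid_iff {n : ℕ} {p : ℝ × ℝ} : p ∈ grid n ↔ ∃ k l, p = pt n k l := by
  simp only [grid, pt, Set.mem_ofPred_eq, zpow_neg, div_eq_mul_inv]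
  norm_cast

lemma pt_mem_grid (n k l : ℕ) : pt n k l ∈ grid n := mem_grid_iff.mpr ⟨k, l, rfl⟩

lemma pt_mem_rect {n k l : ℕ} {a b : ℝ} :
    pt n k l ∈ rect a b ↔ (k : ℝ) / 2 ^ (4 * n) ≤ a ∧ (l : ℝ) / 2 ^ (2 * n) ≤ b := by
  simp only [rect, pt, Set.mem_prod, Set.mem_Icc]
  exact ⟨fun h => ⟨h.1.2, h.2.2⟩, fun h => ⟨⟨by positivity, h.1⟩, by positivity, h.2⟩⟩

lemma pt_mem_rect_of_le {n k l k' l' : ℕ} {a b : ℝ} (hk : k' ≤ k) (hl : l' ≤ l)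
    (h : pt n k l ∈ rect a b) : pt n k' l' ∈ rect a b := by
  rw [pt_mem_rect] at h ⊢
  exact ⟨le_trans (by gcongr) h.1, le_trans (by gcongr) h.2⟩

lemma pt_eq_pt_add (n t k l : ℕ) : pt n k l = pt (n + t) (k * 2 ^ (4 * t)) (l * 2 ^ (2 * t)) := by
  simp only [pt, Prod.mk.injEq, mul_add, pow_add, Nat.cast_mul, Nat.cast_pow, Nat.cast_ofNat]
  constructor <;> field_simp

lemma grid_mono {m n : ℕ} (h : m ≤ n) : grid m ⊆ grid n := by
  intro p hp
  obtain ⟨k, l, rfl⟩ := mem_grid_iff.mp hp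
  obtain ⟨t, rfl⟩ := Nat.exists_eq_add_of_le h
  rw [pt_eq_pt_add m t]
  exact pt_mem_grid _ _ _

lemma pt_div_mem_rect {n t k l : ℕ} {a b : ℝ} (h : pt (n + t) k l ∈ rect a b) :
    pt n (k / 2 ^ (4 * t)) (l / 2 ^ (2 * t)) ∈ rect a b := by
  rw [pt_eq_pt_add n t]
  exact pt_mem_rect_of_le (Nat.div_mul_le_self _ _) (Nat.div_mul_le_self _ _) h

lemma _root_.InSingleRect.exists_index {a b : ℝ} {n : ℕ} (h : InSingleRect (rect a b) n) :
    ∃ K L : ℕ, ∀ k l, pt n k l ∈ rect a b → (K ≤ k ∧ k ≤ K + 1) ∧ (L ≤ l ∧ l ≤ L + 1) := by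
  obtain ⟨K, L, hKL⟩ := h
  refine ⟨K, L, fun k l hkl => ?_⟩
  have := hKL ⟨pt_mem_grid n k l, hkl⟩
  simp only [pt, Set.mem_prod, Set.mem_Icc, zpow_neg, ← div_eq_mul_inv] at this
  norm_cast at this
  simpa only [div_le_div_iff_of_pos_right (by positivity : (0 : ℝ) < ((2 ^ (4 * n) : ℕ) : ℝ)),
    div_le_div_iff_of_pos_right (by positivity : (0 : ℝ) < ((2 ^ (2 * n) : ℕ) : ℝ)),
    Nat.cast_le] using this

lemma le_two_pow_of_pt_mem_rect {n k l : ℕ} {a b : ℝ} (ha : a ≤ 1) (hb : b ≤ 1)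
    (h : pt n k l ∈ rect a b) : k ≤ 2 ^ (4 * n) ∧ l ≤ 2 ^ (2 * n) := by
  rw [pt_mem_rect, div_le_iff₀ (by positivity), div_le_iff₀ (by positivity)] at h
  constructor
  · exact_mod_cast h.1.trans (mul_le_of_le_one_left (by positivity) ha)
  · exact_mod_cast h.2.trans (mul_le_of_le_one_left (by positivity) hb)

section EdgeBounded

variable {α : Type*} [PseudoEMetricSpace α] {f : ℝ × ℝ → α} {a b : ℝ} {n k l : ℕ} {c : ℝ≥0∞}

def EdgeBounded (f : ℝ × ℝ → α) (a b : ℝ) (n : ℕ) (c : ℝ≥0∞) : Prop :=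
  ∀ k l, (pt n (k + 1) l ∈ rect a b → edist (f (pt n (k + 1) l)) (f (pt n k l)) ≤ c) ∧
    (pt n k (l + 1) ∈ rect a b → edist (f (pt n k (l + 1))) (f (pt n k l)) ≤ c)

namespace EdgeBounded

lemma edist_add_fst_le (hf : EdgeBounded f a b n c) {i : ℕ} (h : pt n (k + i) l ∈ rect a b) :
    edist (f (pt n k l)) (f (pt n (k + i) l)) ≤ i * c := by
  have := edist_le_range_sum_of_edist_le (f := fun s => f (pt n (k + s) l)) (d := fun _ => c) i
    fun {s} hs => by
      rw [edist_comm]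
      exact (hf (k + s) l).1 (pt_mem_rect_of_le (by omega) le_rfl h)
  simpa using this

lemma edist_add_snd_le (hf : EdgeBounded f a b n c) {j : ℕ} (h : pt n k (l + j) ∈ rect a b) :
    edist (f (pt n k l)) (f (pt n k (l + j))) ≤ j * c := by
  have := edist_le_range_sum_of_edist_le (f := fun s => f (pt n k (l + s))) (d := fun _ => c) j
    fun {s} hs => by
      rw [edist_comm]
      exact (hf k (l + s)).2 (pt_mem_rect_of_le le_rfl (by omega) h)
  simpa using this

lemma edist_add_le (hf : EdgeBounded f a b n c) {i j : ℕ} (h : pt n (k + i) (l + j) ∈ rect a b) :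
    edist (f (pt n k l)) (f (pt n (k + i) (l + j))) ≤ (i + j) * c :=
  calc edist (f (pt n k l)) (f (pt n (k + i) (l + j)))
      ≤ edist (f (pt n k l)) (f (pt n k (l + j))) +
          edist (f (pt n k (l + j))) (f (pt n (k + i) (l + j))) := edist_triangle _ _ _
    _ ≤ j * c + i * c :=
        add_le_add (hf.edist_add_snd_le (pt_mem_rect_of_le (by omega) le_rfl h))
          (hf.edist_add_fst_le h)
    _ = (i + j) * c := by ring

lemma edist_le_two_mul (hf : EdgeBounded f a b n c) {k₀ l₀ : ℕ} (h : pt n k l ∈ rect a b)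
    (hk₀ : k₀ ≤ k) (hk : k ≤ k₀ + 1) (hl₀ : l₀ ≤ l) (hl : l ≤ l₀ + 1) :
    edist (f (pt n k₀ l₀)) (f (pt n k l)) ≤ 2 * c := by
  obtain ⟨i, rfl⟩ := Nat.exists_eq_add_of_le hk₀
  obtain ⟨j, rfl⟩ := Nat.exists_eq_add_of_le hl₀
  refine (hf.edist_add_le h).trans ?_
  gcongr
  exact_mod_cast (by omega : i + j ≤ 2)

lemma edist_le_four_mul (hf : EdgeBounded f a b n c) {k' l' : ℕ} (h : pt n k l ∈ rect a b)
    (h' : pt n k' l' ∈ rect a b) (hk : k ≤ k' + 1) (hk' : k' ≤ k + 1) (hl : l ≤ l' + 1)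
    (hl' : l' ≤ l + 1) : edist (f (pt n k l)) (f (pt n k' l')) ≤ 4 * c :=
  calc edist (f (pt n k l)) (f (pt n k' l'))
      ≤ edist (f (pt n (min k k') (min l l'))) (f (pt n k l)) +
          edist (f (pt n (min k k') (min l l'))) (f (pt n k' l')) := edist_triangle_left _ _ _
    _ ≤ 2 * c + 2 * c :=
        add_le_add (hf.edist_le_two_mul h (by omega) (by omega) (by omega) (by omega))
          (hf.edist_le_two_mul h' (by omega) (by omega) (by omega) (by omega))
    _ = 4 * c := by ring

/-- A level-`(n+1)` point is at most `15 + 3` edges away from its level-`n` ancestor. -/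
lemma edist_div_le (hf : EdgeBounded f a b (n + 1) c) (h : pt (n + 1) k l ∈ rect a b) :
    edist (f (pt n (k / 16) (l / 4))) (f (pt (n + 1) k l)) ≤ 18 * c := by
  have hk : k / 16 * 2 ^ (4 * 1) + k % 16 = k := by omega
  have hl : l / 4 * 2 ^ (2 * 1) + l % 4 = l := by omega
  have key := hf.edist_add_le (k := k / 16 * 2 ^ (4 * 1)) (l := l / 4 * 2 ^ (2 * 1))
    (i := k % 16) (j := l % 4) (by rwa [hk, hl])
  rw [hk, hl, ← pt_eq_pt_add] at key
  refine key.trans ?_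
  gcongr
  exact_mod_cast (by omega : k % 16 + l % 4 ≤ 18)

end EdgeBounded

lemma edist_div_two_pow_le {δ : ℕ → ℝ≥0∞} (hf : ∀ m, n < m → EdgeBounded f a b m (δ m))
    (t : ℕ) (h : pt (n + t) k l ∈ rect a b) :
    edist (f (pt n (k / 2 ^ (4 * t)) (l / 2 ^ (2 * t)))) (f (pt (n + t) k l)) ≤
      18 * ∑ i ∈ range t, δ (n + 1 + i) := by
  induction t generalizing n with
  | zero => simp
  | succ t ih =>
    rw [show n + (t + 1) = n + 1 + t by omega] at h ⊢
    have hk : k / 2 ^ (4 * (t + 1)) = k / 2 ^ (4 * t) / 16 := by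
      rw [Nat.div_div_eq_div_mul, mul_add, pow_add]; rfl
    have hl : l / 2 ^ (2 * (t + 1)) = l / 2 ^ (2 * t) / 4 := by
      rw [Nat.div_div_eq_div_mul, mul_add, pow_add]; rfl
    have step := (hf (n + 1) (by omega)).edist_div_le (pt_div_mem_rect h)
    rw [hk, hl]
    calc _ ≤ edist (f (pt n (k / 2 ^ (4 * t) / 16) (l / 2 ^ (2 * t) / 4)))
            (f (pt (n + 1) (k / 2 ^ (4 * t)) (l / 2 ^ (2 * t)))) +
          edist (f (pt (n + 1) (k / 2 ^ (4 * t)) (l / 2 ^ (2 * t)))) (f (pt (n + 1 + t) k l)) :=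
          edist_triangle _ _ _
      _ ≤ 18 * δ (n + 1) + 18 * ∑ i ∈ range t, δ (n + 1 + 1 + i) :=
          add_le_add step (ih (fun m hm => hf m (by omega)) h)
      _ = 18 * ∑ i ∈ range (t + 1), δ (n + 1 + i) := by
          rw [sum_range_succ', mul_add, add_comm]
          simp only [add_assoc, add_comm 1]

end EdgeBounded

lemma Delta_nonneg (x : ℝ × ℝ) : 0 ≤ Delta x := le_max_of_le_left (by positivity)

lemma Delta_neg (x : ℝ × ℝ) : Delta (-x) = Delta x := by simp [Delta]

lemma abs_fst_le_Delta_pow (x : ℝ × ℝ) : |x.1| ≤ Delta x ^ 4 :=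
  calc |x.1| = (|x.1| ^ ((4 : ℕ)⁻¹ : ℝ)) ^ 4 :=
        (rpow_inv_natCast_pow (abs_nonneg _) four_ne_zero).symm
    _ ≤ Delta x ^ 4 := by
      gcongr
      exact le_of_eq_of_le (by norm_num) (le_max_left _ _)

lemma abs_snd_le_Delta_pow (x : ℝ × ℝ) : |x.2| ≤ Delta x ^ 2 :=
  calc |x.2| = (|x.2| ^ ((2 : ℕ)⁻¹ : ℝ)) ^ 2 :=
        (rpow_inv_natCast_pow (abs_nonneg _) two_ne_zero).symm
    _ ≤ Delta x ^ 2 := by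
      gcongr
      exact le_of_eq_of_le (by norm_num) (le_max_right _ _)

lemma Delta_sub_le_one {a b : ℝ} (ha : a ≤ 1) (hb : b ≤ 1) {p q : ℝ × ℝ} (hp : p ∈ rect a b)
    (hq : q ∈ rect a b) : Delta (p - q) ≤ 1 := by
  simp only [rect, Set.mem_prod, Set.mem_Icc] at hp hq
  have h1 : |p.1 - q.1| ≤ 1 := abs_sub_le_iff.mpr ⟨by linarith, by linarith⟩
  have h2 : |p.2 - q.2| ≤ 1 := abs_sub_le_iff.mpr ⟨by linarith, by linarith⟩
  exact max_le (rpow_le_one (abs_nonneg _) h1 (by norm_num))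
    (rpow_le_one (abs_nonneg _) h2 (by norm_num))

lemma two_pow_floor_logb_mul_le_one {D : ℝ} (h0 : 0 ≤ D) (h1 : D ≤ 1) :
    2 ^ ⌊logb 2 (1 / D)⌋₊ * D ≤ 1 := by
  rcases h0.eq_or_lt with rfl | hD
  · simp
  have hlog : 0 ≤ logb 2 (1 / D) := logb_nonneg one_lt_two (one_le_one_div hD h1)
  calc (2 : ℝ) ^ ⌊logb 2 (1 / D)⌋₊ * D ≤ 2 ^ logb 2 (1 / D) * D := by
        gcongr
        rw [← rpow_natCast]
        exact rpow_le_rpow_of_exponent_le one_le_two (Nat.floor_le hlog)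
    _ = 1 := by rw [rpow_logb two_pos (by norm_num) (by positivity)]; field_simp

lemma le_add_two_pow_of_abs_sub_le {k k' m s : ℕ}
    (h : |(k : ℝ) / 2 ^ (m + s) - k' / 2 ^ (m + s)| * 2 ^ m ≤ 1) : k ≤ k' + 2 ^ s := by
  rw [← sub_div, abs_div, abs_of_pos (by positivity : (0 : ℝ) < 2 ^ (m + s)), pow_add,
    div_mul_eq_mul_div, div_le_one (by positivity), mul_comm (2 ^ m : ℝ) (2 ^ s)] at h
  have : |(k : ℝ) - k'| ≤ 2 ^ s := le_of_mul_le_mul_right h (by positivity)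
  exact_mod_cast (by linarith [le_abs_self ((k : ℝ) - k')] : (k : ℝ) ≤ k' + 2 ^ s)

lemma div_le_div_add_one_of_le_add {k k' d : ℕ} (hd : 0 < d) (h : k ≤ k' + d) :
    k / d ≤ k' / d + 1 :=
  calc k / d ≤ (k' + d) / d := Nat.div_le_div_right h
    _ = k' / d + 1 := Nat.add_div_right k' hd

lemma div_le_div_add_one_of_two_pow_mul_Delta_le_one {p q : ℝ × ℝ} {n t k l k' l' : ℕ}
    (hp : p = pt (n + t) k l) (hq : q = pt (n + t) k' l') (h : 2 ^ n * Delta (p - q) ≤ 1) :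
    k / 2 ^ (4 * t) ≤ k' / 2 ^ (4 * t) + 1 ∧ l / 2 ^ (2 * t) ≤ l' / 2 ^ (2 * t) + 1 := by
  have h0 : 0 ≤ 2 ^ n * Delta (p - q) := by have := Delta_nonneg (p - q); positivity
  have h1 : |(p - q).1| * 2 ^ (4 * n) ≤ 1 :=
    calc |(p - q).1| * 2 ^ (4 * n) ≤ Delta (p - q) ^ 4 * 2 ^ (4 * n) := by
          gcongr; exact abs_fst_le_Delta_pow _
      _ = (2 ^ n * Delta (p - q)) ^ 4 := by ring
      _ ≤ 1 := pow_le_one₀ h0 h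
  have h2 : |(p - q).2| * 2 ^ (2 * n) ≤ 1 :=
    calc |(p - q).2| * 2 ^ (2 * n) ≤ Delta (p - q) ^ 2 * 2 ^ (2 * n) := by
          gcongr; exact abs_snd_le_Delta_pow _
      _ = (2 ^ n * Delta (p - q)) ^ 2 := by ring
      _ ≤ 1 := pow_le_one₀ h0 h
  subst hp hq
  simp only [pt, Prod.fst_sub, Prod.snd_sub, mul_add] at h1 h2
  exact ⟨div_le_div_add_one_of_le_add (by positivity) (le_add_two_pow_of_abs_sub_le h1),
    div_le_div_add_one_of_le_add (by positivity) (le_add_two_pow_of_abs_sub_le h2)⟩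

lemma tsum_add_le_tsum_add (δ : ℕ → ℝ≥0∞) {m n : ℕ} (h : m ≤ n) :
    ∑' i, δ (n + i) ≤ ∑' i, δ (m + i) := by
  obtain ⟨s, rfl⟩ := Nat.exists_eq_add_of_le h
  simpa only [add_assoc] using
    ENNReal.tsum_comp_le_tsum_of_injective (add_right_injective s) fun i => δ (m + i)

theorem edist_le_of_edgeBounded {α : Type*} [PseudoEMetricSpace α] {f : ℝ × ℝ → α} {a b : ℝ}
    (ha : a ≤ 1) (hb : b ≤ 1) {N : ℕ} (hN : InSingleRect (rect a b) N) {δ : ℕ → ℝ≥0∞}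
    (hf : ∀ n, N ≤ n → EdgeBounded f a b n (δ n)) {p q : ℝ × ℝ}
    (hp : p ∈ (⋃ n, grid n) ∩ rect a b) (hq : q ∈ (⋃ n, grid n) ∩ rect a b) :
    edist (f p) (f q) ≤ 40 * ∑' j, δ (⌊logb 2 (1 / Delta (p - q))⌋₊ + j) := by
  obtain ⟨hpg, hpR⟩ := hp
  obtain ⟨hqg, hqR⟩ := hq
  obtain ⟨m₁, hpg⟩ := Set.mem_iUnion.mp hpg
  obtain ⟨m₂, hqg⟩ := Set.mem_iUnion.mp hqg
  set n₀ := ⌊logb 2 (1 / Delta (p - q))⌋₊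
  set T := ∑' j, δ (n₀ + j)
  set s := max n₀ N
  set t := m₁ + m₂
  obtain ⟨k, l, hpkl⟩ := mem_grid_iff.mp (grid_mono (by omega : m₁ ≤ s + t) hpg)
  obtain ⟨k', l', hqkl⟩ := mem_grid_iff.mp (grid_mono (by omega : m₂ ≤ s + t) hqg)
  have hclose : k / 2 ^ (4 * t) ≤ k' / 2 ^ (4 * t) + 1 ∧ k' / 2 ^ (4 * t) ≤ k / 2 ^ (4 * t) + 1 ∧
      l / 2 ^ (2 * t) ≤ l' / 2 ^ (2 * t) + 1 ∧ l' / 2 ^ (2 * t) ≤ l / 2 ^ (2 * t) + 1 := by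
    -- at level `n₀` by the choice of `n₀`, at level `N` because `𝒢_N ∩ R₁` lies in one cell
    rcases le_total N n₀ with h | h
    · rw [show s = n₀ from max_eq_left h] at hpkl hqkl
      have hD := two_pow_floor_logb_mul_le_one (Delta_nonneg _) (Delta_sub_le_one ha hb hpR hqR)
      have h₁ := div_le_div_add_one_of_two_pow_mul_Delta_le_one hpkl hqkl hD
      have h₂ := div_le_div_add_one_of_two_pow_mul_Delta_le_one hqkl hpkl
        (by rwa [← neg_sub, Delta_neg])
      exact ⟨h₁.1, h₂.1, h₁.2, h₂.2⟩
    · rw [show s = N from max_eq_right h] at hpkl hqkl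
      obtain ⟨K, L, hKL⟩ := hN.exists_index
      have := hKL _ _ (pt_div_mem_rect (hpkl ▸ hpR))
      have := hKL _ _ (pt_div_mem_rect (hqkl ▸ hqR))
      omega
  have hdesc : ∀ k l, pt (s + t) k l ∈ rect a b →
      edist (f (pt s (k / 2 ^ (4 * t)) (l / 2 ^ (2 * t)))) (f (pt (s + t) k l)) ≤ 18 * T :=
    fun k l h => (edist_div_two_pow_le (fun m hm => hf m (by omega)) t h).trans <| by
      gcongr
      exact (ENNReal.sum_le_tsum _).trans (tsum_add_le_tsum_add δ (by omega))
  have hδs : δ s ≤ T :=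
    calc δ s = δ (n₀ + (s - n₀)) := by rw [Nat.add_sub_cancel' (le_max_left _ _)]
      _ ≤ T := ENNReal.le_tsum _
  have hmid := (hf s (le_max_right _ _)).edist_le_four_mul (pt_div_mem_rect (hpkl ▸ hpR))
    (pt_div_mem_rect (hqkl ▸ hqR)) hclose.1 hclose.2.1 hclose.2.2.1 hclose.2.2.2
  rw [hpkl] at hpR ⊢
  rw [hqkl] at hqR ⊢
  calc edist (f (pt (s + t) k l)) (f (pt (s + t) k' l'))
      ≤ edist (f (pt (s + t) k l)) (f (pt s (k / 2 ^ (4 * t)) (l / 2 ^ (2 * t)))) +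
          edist (f (pt s (k / 2 ^ (4 * t)) (l / 2 ^ (2 * t))))
            (f (pt s (k' / 2 ^ (4 * t)) (l' / 2 ^ (2 * t)))) +
          edist (f (pt s (k' / 2 ^ (4 * t)) (l' / 2 ^ (2 * t)))) (f (pt (s + t) k' l')) :=
        edist_triangle4 _ _ _ _
    _ ≤ 18 * T + 4 * T + 18 * T := by
        gcongr
        · exact edist_comm (f _) (f _) ▸ hdesc k l hpR
        · exact hmid.trans (by gcongr)
        · exact hdesc k' l' hqR
    _ = 40 * T := by ring

lemma isNN_pt_succ_fst (n k l : ℕ) : IsNN n (pt n (k + 1) l) (pt n k l) := by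
  left
  refine ⟨?_, rfl⟩
  rw [zpow_neg]
  simp only [pt, ← sub_div, Nat.cast_succ, add_sub_cancel_left, one_div]
  rw [abs_of_pos (by positivity)]
  norm_cast

lemma isNN_pt_succ_snd (n k l : ℕ) : IsNN n (pt n k (l + 1)) (pt n k l) := by
  right
  refine ⟨rfl, ?_⟩
  rw [zpow_neg]
  simp only [pt, ← sub_div, Nat.cast_succ, add_sub_cancel_left, one_div]
  rw [abs_of_pos (by positivity)]
  norm_cast

section EdgeEvent

variable {Ω : Type*}

open scoped Classical in
/-- `(k, l)` stands for the edge from `pt n k l` to `pt n (k + 1) l`; when `a, b ≤ 1` the ranges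
contain every such edge inside `[0,a] × [0,b]`. -/
noncomputable def horizontalEdges (n : ℕ) (a b : ℝ) : Finset (ℕ × ℕ) :=
  (range (2 ^ (4 * n)) ×ˢ range (2 ^ (2 * n) + 1)).filter fun e => pt n (e.1 + 1) e.2 ∈ rect a b

open scoped Classical in
noncomputable def verticalEdges (n : ℕ) (a b : ℝ) : Finset (ℕ × ℕ) :=
  (range (2 ^ (4 * n) + 1) ×ˢ range (2 ^ (2 * n))).filter fun e => pt n e.1 (e.2 + 1) ∈ rect a b

def edgeEvent (B : ℝ × ℝ → ℝ × ℝ → Set Ω) (n : ℕ) (a b : ℝ) : Set Ω :=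
  (⋃ e ∈ horizontalEdges n a b, B (pt n (e.1 + 1) e.2) (pt n e.1 e.2)) ∪
    ⋃ e ∈ verticalEdges n a b, B (pt n e.1 (e.2 + 1)) (pt n e.1 e.2)

lemma card_horizontalEdges_add_card_verticalEdges_le (n : ℕ) (a b : ℝ) :
    #(horizontalEdges n a b) + #(verticalEdges n a b) ≤ 4 * 2 ^ (6 * n) := by
  classical
  have hH : #(horizontalEdges n a b) ≤ 2 ^ (4 * n) * (2 ^ (2 * n) + 1) :=
    (card_filter_le _ _).trans (by simp)
  have hV : #(verticalEdges n a b) ≤ (2 ^ (4 * n) + 1) * 2 ^ (2 * n) :=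
    (card_filter_le _ _).trans (by simp)
  have h6 : 2 ^ (6 * n) = 2 ^ (4 * n) * 2 ^ (2 * n) := by rw [← pow_add]; ring_nf
  have h4 : 1 ≤ 2 ^ (4 * n) := Nat.one_le_two_pow
  have h2 : 1 ≤ 2 ^ (2 * n) := Nat.one_le_two_pow
  rw [h6]
  nlinarith

lemma measure_edgeEvent_le [MeasurableSpace Ω] (μ : Measure Ω) {B : ℝ × ℝ → ℝ × ℝ → Set Ω}
    {n : ℕ} {a b : ℝ} {c : ℝ≥0∞}
    (hB : ∀ p q : ℝ × ℝ, p ∈ grid n ∩ rect a b → q ∈ grid n ∩ rect a b →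
      IsNN n p q → μ (B p q) ≤ c) :
    μ (edgeEvent B n a b) ≤ 4 * 2 ^ (6 * n) * c := by
  classical
  have hH : ∀ e ∈ horizontalEdges n a b, μ (B (pt n (e.1 + 1) e.2) (pt n e.1 e.2)) ≤ c :=
    fun e he => by
      have h := (mem_filter.mp he).2
      exact hB _ _ ⟨pt_mem_grid _ _ _, h⟩ ⟨pt_mem_grid _ _ _, pt_mem_rect_of_le (by omega) le_rfl h⟩
        (isNN_pt_succ_fst _ _ _)
  have hV : ∀ e ∈ verticalEdges n a b, μ (B (pt n e.1 (e.2 + 1)) (pt n e.1 e.2)) ≤ c :=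
    fun e he => by
      have h := (mem_filter.mp he).2
      exact hB _ _ ⟨pt_mem_grid _ _ _, h⟩ ⟨pt_mem_grid _ _ _, pt_mem_rect_of_le le_rfl (by omega) h⟩
        (isNN_pt_succ_snd _ _ _)
  calc μ (edgeEvent B n a b)
      ≤ ∑ e ∈ horizontalEdges n a b, μ (B (pt n (e.1 + 1) e.2) (pt n e.1 e.2)) +
          ∑ e ∈ verticalEdges n a b, μ (B (pt n e.1 (e.2 + 1)) (pt n e.1 e.2)) :=
        (measure_union_le _ _).trans
          (add_le_add (measure_biUnion_finset_le _ _) (measure_biUnion_finset_le _ _))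
    _ ≤ #(horizontalEdges n a b) • c + #(verticalEdges n a b) • c :=
        add_le_add (sum_le_card_nsmul _ _ _ hH) (sum_le_card_nsmul _ _ _ hV)
    _ = ((#(horizontalEdges n a b) + #(verticalEdges n a b) : ℕ) : ℝ≥0∞) * c := by
        simp only [nsmul_eq_mul, Nat.cast_add, add_mul]
    _ ≤ 4 * 2 ^ (6 * n) * c := by
        gcongr
        exact_mod_cast card_horizontalEdges_add_card_verticalEdges_le n a b

lemma edgeBounded_of_notMem_edgeEvent {E : Type*} [SeminormedAddCommGroup E] {a b : ℝ}
    (ha : a ≤ 1) (hb : b ≤ 1) {Y : ℝ × ℝ → Ω → E} {n : ℕ} {c : ℝ} {ω : Ω}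
    (h : ω ∉ edgeEvent (fun p q => {ω | c < ‖Y p ω - Y q ω‖}) n a b) :
    EdgeBounded (fun p => Y p ω) a b n (ENNReal.ofReal c) := by
  classical
  intro k l
  simp only [edgeEvent, Set.mem_union, Set.mem_iUnion₂, Set.mem_ofPred_eq, not_or, not_exists,
    not_lt] at h
  simp only [edist_dist, dist_eq_norm]
  constructor
  · intro hkl
    have := le_two_pow_of_pt_mem_rect ha hb hkl
    exact ENNReal.ofReal_le_ofReal
      (h.1 (k, l) (mem_filter.mpr ⟨by simp only [mem_product, mem_range]; omega, hkl⟩))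
  · intro hkl
    have := le_two_pow_of_pt_mem_rect ha hb hkl
    exact ENNReal.ofReal_le_ofReal
      (h.2 (k, l) (mem_filter.mpr ⟨by simp only [mem_product, mem_range]; omega, hkl⟩))

end EdgeEvent

end ParabolicGrid

open ParabolicGrid

theorem chaining_probability_estimate_general
    (d : ℕ) (Ω : Type) [MeasurableSpace Ω] (P : Measure Ω)
    (a b : ℝ) (ha : a ∈ Set.Icc (0:ℝ) 1) (hb : b ∈ Set.Icc (0:ℝ) 1)
    (R₁ : Set (ℝ × ℝ)) (hR₁ : R₁ = Set.Icc 0 a ×ˢ Set.Icc 0 b)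
    (Y : ℝ × ℝ → Ω → EuclideanSpace ℝ (Fin d))
    (nR₁ : ℕ) (hnR₁ : IsGreatest {n : ℕ | InSingleRect R₁ n} nR₁)
    (δ ε : ℕ → ℝ)
    (hY : ∀ n : ℕ, nR₁ ≤ n → ∀ p q : ℝ × ℝ, p ∈ grid n ∩ R₁ → q ∈ grid n ∩ R₁ →
      IsNN n p q → P {ω | δ n < ‖Y p ω - Y q ω‖} ≤ ENNReal.ofReal (ε n)) :
    P {ω | ¬ ∀ p q : ℝ × ℝ, p ∈ (⋃ n, grid n) ∩ R₁ → q ∈ (⋃ n, grid n) ∩ R₁ →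
        (‖Y p ω - Y q ω‖₊ : ℝ≥0∞) ≤
          40 * ∑' n : ℕ, ENNReal.ofReal (δ (⌊Real.logb 2 (1 / Delta (p - q))⌋₊ + n))}
      ≤ 4 * ∑' n : ℕ, (2 : ℝ≥0∞) ^ (6 * (nR₁ + n)) * ENNReal.ofReal (ε (nR₁ + n)) := by
  subst hR₁
  let bad (n : ℕ) : Set Ω := edgeEvent (fun p q => {ω | δ n < ‖Y p ω - Y q ω‖}) n a b
  calc _ ≤ P (⋃ m, bad (nR₁ + m)) := measure_mono fun ω hω => by
        by_contra hgood
        simp only [Set.mem_iUnion, not_exists] at hgood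
        refine hω fun p q hp hq => ?_
        rw [← enorm_eq_nnnorm, ← edist_eq_enorm_sub]
        refine edist_le_of_edgeBounded (f := fun p => Y p ω)
          (δ := fun n => ENNReal.ofReal (δ n)) ha.2 hb.2 hnR₁.1 (fun n hn => ?_) hp hq
        obtain ⟨m, rfl⟩ := Nat.exists_eq_add_of_le hn
        exact edgeBounded_of_notMem_edgeEvent ha.2 hb.2 (hgood m)
    _ ≤ ∑' m, P (bad (nR₁ + m)) := measure_iUnion_le _
    _ ≤ ∑' m, 4 * ((2 : ℝ≥0∞) ^ (6 * (nR₁ + m)) * ENNReal.ofReal (ε (nR₁ + m))) :=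
        ENNReal.tsum_le_tsum fun m =>
          (measure_edgeEvent_le P (hY _ (Nat.le_add_right _ _))).trans_eq (mul_assoc _ _ _)
    _ = _ := ENNReal.tsum_mul_left

theorem chaining_probability_estimate
    (d : ℕ) (Ω : Type) [MeasurableSpace Ω] (P : Measure Ω) [IsProbabilityMeasure P]
    (a b : ℝ) (ha : a ∈ Set.Icc (0:ℝ) 1) (hb : b ∈ Set.Icc (0:ℝ) 1)
    (R₁ : Set (ℝ × ℝ)) (hR₁ : R₁ = Set.Icc 0 a ×ˢ Set.Icc 0 b)
    (Y : ℝ × ℝ → Ω → EuclideanSpace ℝ (Fin d))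
    (nR₁ : ℕ) (hnR₁ : IsGreatest {n : ℕ | InSingleRect R₁ n} nR₁)
    (δ ε : ℕ → ℝ) (hδ : ∀ n, 0 ≤ δ n) (hε : ∀ n, 0 ≤ ε n)
    (hY : ∀ n : ℕ, nR₁ ≤ n → ∀ p q : ℝ × ℝ, p ∈ grid n ∩ R₁ → q ∈ grid n ∩ R₁ →
      IsNN n p q → P {ω | δ n < ‖Y p ω - Y q ω‖} ≤ ENNReal.ofReal (ε n)) :
    P {ω | ¬ ∀ p q : ℝ × ℝ, p ∈ (⋃ n, grid n) ∩ R₁ → q ∈ (⋃ n, grid n) ∩ R₁ →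
        (‖Y p ω - Y q ω‖₊ : ℝ≥0∞) ≤
          40 * ∑' n : ℕ, ENNReal.ofReal (δ (⌊Real.logb 2 (1 / Delta (p - q))⌋₊ + n))}
      ≤ 4 * ∑' n : ℕ, (2 : ℝ≥0∞) ^ (6 * (nR₁ + n)) * ENNReal.ofReal (ε (nR₁ + n)) :=
  chaining_probability_estimate_general d Ω P a b ha hb R₁ hR₁ Y nR₁ hnR₁ δ ε hY
end
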